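/- arXiv:math/9912003 — 3 statements merged into one kernel-verified Lean document; each statement's English description precedes it below -/
import Mathlib

section
/- Let r′, r″ be positive integers, set r = r′ + r″, let d > 0 be a real number, let α₁, …, αᵣ be real numbers, set s = (α₁ + ⋯ + αᵣ)/r, let a′ be a real number, and set a″ = −r·s·d − a′. Assume: (i) 0 ≤ (r² − r)·s²·d² − d²·∑_{i=1}^{r}(αᵢ − s)² − 2·a′·a″ − ((r′ − 1)/r′)·a′² − ((r″ − 1)/r″)·a″², and (ii) a′/r′ + s·d > 0. Then for every subset I′ ⊆ {1, …, r} of cardinality r′, one has a′ + d·∑_{i∈I′} αᵢ ≥ 0. -/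
set_option maxHeartbeats 1600000


/-- The numerical core of the length-one Harder–Narasimhan filtration case of
Proposition 2: from the Bogomolov-type inequality (i) and the destabilizing
inequality (ii), the parabolic degree `a' + d·∑_{i∈I'} αᵢ` of the subsheaf is
non-negative. -/
theorem parabolic_degree_nonneg_length_one
    (r' r'' : ℕ) (hr' : 0 < r') (hr'' : 0 < r'')
    (d : ℝ) (hd : 0 < d)
    (α : Fin (r' + r'') → ℝ)
    (s : ℝ) (hs : s = (∑ i, α i) / ((r' + r'' : ℕ) : ℝ))
    (a' a'' : ℝ) (ha'' : a'' = -(((r' + r'' : ℕ) : ℝ)) * s * d - a')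
    (hbog : 0 ≤ (((r' + r'' : ℕ) : ℝ) ^ 2 - ((r' + r'' : ℕ) : ℝ)) * s ^ 2 * d ^ 2
        - d ^ 2 * ∑ i, (α i - s) ^ 2
        - 2 * a' * a''
        - (((r' : ℝ) - 1) / (r' : ℝ)) * a' ^ 2
        - (((r'' : ℝ) - 1) / (r'' : ℝ)) * a'' ^ 2)
    (hdestab : 0 < a' / (r' : ℝ) + s * d)
    (I' : Finset (Fin (r' + r''))) (hI' : I'.card = r') :
    0 ≤ a' + d * ∑ i ∈ I', α i := by
  set N : ℝ := (r' : ℝ) with hN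
  set M : ℝ := (r'' : ℝ) with hM
  have hNpos : 0 < N := by rw [hN]; exact_mod_cast hr'
  have hMpos : 0 < M := by rw [hM]; exact_mod_cast hr''
  have hcast : ((r' + r'' : ℕ) : ℝ) = N + M := by push_cast; ring
  have hnpos : 0 < N + M := by linarith
  -- total sum of α
  have hsum : ∑ i, α i = (N + M) * s := by
    rw [hs, hcast]; field_simp
  set β : Fin (r' + r'') → ℝ := fun i => α i - s with hβ
  set T : ℝ := ∑ i, β i ^ 2 with hT
  set S : ℝ := ∑ i ∈ I', β i with hS
  -- sum of β is zero
  have hβsum : ∑ i, β i = 0 := by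
    simp only [hβ, Finset.sum_sub_distrib, Finset.sum_const, hsum]
    simp [Finset.card_univ, hcast]
  -- complement sum
  have hsplit : S + ∑ i ∈ I'ᶜ, β i = 0 := by
    rw [hS, Finset.sum_add_sum_compl]; exact hβsum
  have hTsplit : (∑ i ∈ I', β i ^ 2) + ∑ i ∈ I'ᶜ, β i ^ 2 = T := by
    rw [hT, Finset.sum_add_sum_compl]
  have hcardc : (I'ᶜ).card = r'' := by
    rw [Finset.card_compl, hI']
    simp
  -- Cauchy-Schwarz on both parts
  have hCS1 : S ^ 2 ≤ N * ∑ i ∈ I', β i ^ 2 := by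
    have := sq_sum_le_card_mul_sum_sq (s := I') (f := β)
    rw [hI'] at this
    exact_mod_cast this
  have hCS2 : S ^ 2 ≤ M * ∑ i ∈ I'ᶜ, β i ^ 2 := by
    have := sq_sum_le_card_mul_sum_sq (s := I'ᶜ) (f := β)
    rw [hcardc] at this
    have h2 : (∑ i ∈ I'ᶜ, β i) ^ 2 = S ^ 2 := by
      have : ∑ i ∈ I'ᶜ, β i = -S := by linarith
      rw [this]; ring
    rw [h2] at this
    exact_mod_cast this
  -- combine: (N+M) S² ≤ N M T
  have hcomb : (N + M) * S ^ 2 ≤ N * M * T := by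
    have e : N * M * T = M * (N * ∑ i ∈ I', β i ^ 2) + N * (M * ∑ i ∈ I'ᶜ, β i ^ 2) := by
      rw [← hTsplit]; ring
    nlinarith [mul_le_mul_of_nonneg_left hCS1 hMpos.le,
      mul_le_mul_of_nonneg_left hCS2 hNpos.le]
  set u : ℝ := a' + N * s * d with hu
  have hupos : 0 < u := by
    have he : u = N * (a' / N + s * d) := by rw [hu]; field_simp
    rw [he]; exact mul_pos hNpos hdestab
  -- key inequality from Bogomolov
  have hkey : N * M * d ^ 2 * T ≤ (N + M) * u ^ 2 := by
    have hid : N * M * (((((r' + r'' : ℕ) : ℝ)) ^ 2 - (((r' + r'' : ℕ) : ℝ))) * s ^ 2 * d ^ 2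
        - d ^ 2 * T
        - 2 * a' * a''
        - (((N - 1)) / N) * a' ^ 2
        - (((M - 1)) / M) * a'' ^ 2)
        = (N + M) * u ^ 2 - N * M * d ^ 2 * T := by
      rw [hcast, ha'', hcast, hu]
      field_simp
      ring
    have h0 := mul_nonneg (mul_nonneg hNpos.le hMpos.le) hbog
    rw [hid] at h0
    linarith
  have hdS : d ^ 2 * S ^ 2 ≤ u ^ 2 := by
    have h1 : (N + M) * (d ^ 2 * S ^ 2) ≤ d ^ 2 * (N * M * T) := by
      nlinarith [mul_le_mul_of_nonneg_left hcomb (sq_nonneg d)]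
    have h2 : d ^ 2 * (N * M * T) ≤ (N + M) * u ^ 2 := by nlinarith [hkey]
    nlinarith [h1, h2, hnpos]
  -- conclude
  have hgoal : a' + d * ∑ i ∈ I', α i = u + d * S := by
    rw [hu, hS, hβ]
    simp only [Finset.sum_sub_distrib, Finset.sum_const, hI', nsmul_eq_mul]
    ring
  rw [hgoal]
  nlinarith [hdS, hupos, sq_nonneg (u + d * S), sq_nonneg (u - d * S)]
end

section
/- Let a₁ > a₂ > a₃ be real numbers and l ≥ 0 a real number. Define x_m² = (2/3)·(−l + a₁² + a₂² + a₃²) − (2/9)·(a₁ + a₂ + a₃)². Let x, y be real numbers with x² ≤ x_m² and (y + x/2)² = (3/4)·(x_m² − x²). If (a₁ + a₂ − 2a₃)/3 + x + y < 0, then x + (2a₁ − a₂ − a₃)/3 > 0. -/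
/-!
Put `b = a − (a₁ + a₂ + a₃)/3` and `c = (x, y, −x − y)`. Both lie in the plane `Σ = 0`, and the
conic condition says `‖c‖² = ‖b‖² − l ≤ ‖b‖²`, while `par-deg E₁ = c₁ + b₁` and
`par-deg E₂ = −(c₃ + b₃)`. If both were negative (the first only non-positive), then `d = c + b`
would have zero sum and `d₁ ≤ 0 < d₃`, hence pair strictly negatively with the strictly
decreasing `b`, forcing `‖c‖² = ‖d − b‖² > ‖b‖²`.
-/

lemma mul_add_mul_add_mul_neg_of_sum_eq_zero {b₁ b₂ b₃ d₁ d₂ d₃ : ℝ} (h12 : b₂ < b₁)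
    (h23 : b₃ < b₂) (hd : d₁ + d₂ + d₃ = 0) (hd₁ : d₁ ≤ 0) (hd₃ : 0 < d₃) :
    d₁ * b₁ + d₂ * b₂ + d₃ * b₃ < 0 := by
  have hd₂ : d₂ = -d₁ - d₃ := by linarith
  have h₁ : d₁ * (b₁ - b₂) ≤ 0 := mul_nonpos_of_nonpos_of_nonneg hd₁ (by linarith)
  have h₃ : d₃ * (b₃ - b₂) < 0 := mul_neg_of_pos_of_neg hd₃ (by linarith)
  calc d₁ * b₁ + d₂ * b₂ + d₃ * b₃ = d₁ * (b₁ - b₂) + d₃ * (b₃ - b₂) := by rw [hd₂]; ring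
    _ < 0 := by linarith

lemma sum_sq_lt_sum_sq_of_strictAnti {b₁ b₂ b₃ c₁ c₂ c₃ : ℝ} (h12 : b₂ < b₁) (h23 : b₃ < b₂)
    (hsum : (c₁ + b₁) + (c₂ + b₂) + (c₃ + b₃) = 0) (h₁ : c₁ + b₁ ≤ 0) (h₃ : 0 < c₃ + b₃) :
    b₁ ^ 2 + b₂ ^ 2 + b₃ ^ 2 < c₁ ^ 2 + c₂ ^ 2 + c₃ ^ 2 := by
  have hinner := mul_add_mul_add_mul_neg_of_sum_eq_zero h12 h23 hsum h₁ h₃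
  have hexpand : c₁ ^ 2 + c₂ ^ 2 + c₃ ^ 2
      = (c₁ + b₁) ^ 2 + (c₂ + b₂) ^ 2 + (c₃ + b₃) ^ 2
        - 2 * ((c₁ + b₁) * b₁ + (c₂ + b₂) * b₂ + (c₃ + b₃) * b₃)
        + (b₁ ^ 2 + b₂ ^ 2 + b₃ ^ 2) := by ring
  rw [hexpand]
  linarith [sq_nonneg (c₁ + b₁), sq_nonneg (c₂ + b₂), sq_nonneg (c₃ + b₃)]

theorem rank_three_conic_argument_general
    (a₁ a₂ a₃ l : ℝ) (h12 : a₂ < a₁) (h23 : a₃ < a₂) (hl : 0 ≤ l)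
    (xm2 : ℝ)
    (hxm : xm2 = (2 / 3) * (-l + a₁ ^ 2 + a₂ ^ 2 + a₃ ^ 2)
        - (2 / 9) * (a₁ + a₂ + a₃) ^ 2)
    (x y : ℝ)
    (hy : (y + x / 2) ^ 2 = (3 / 4) * (xm2 - x ^ 2))
    (hneg : (a₁ + a₂ - 2 * a₃) / 3 + x + y < 0) :
    0 < x + (2 * a₁ - a₂ - a₃) / 3 := by
  by_contra! hE₁
  have hcircle : x ^ 2 + y ^ 2 + (-(x + y)) ^ 2
      = (a₁ - (a₁ + a₂ + a₃) / 3) ^ 2 + (a₂ - (a₁ + a₂ + a₃) / 3) ^ 2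
        + (a₃ - (a₁ + a₂ + a₃) / 3) ^ 2 - l := by
    rw [hxm] at hy
    linear_combination 2 * hy
  have hlt := sum_sq_lt_sum_sq_of_strictAnti (c₁ := x) (c₂ := y) (c₃ := -(x + y))
    (b₁ := a₁ - (a₁ + a₂ + a₃) / 3) (b₂ := a₂ - (a₁ + a₂ + a₃) / 3)
    (b₃ := a₃ - (a₁ + a₂ + a₃) / 3) (by linarith) (by linarith) (by ring) (by linarith)
    (by linarith)
  linarith

/-- The conic argument in the rank-3 case of the proof of Proposition 2:
if `par-deg E₂ = (a₁+a₂−2a₃)/3 + x + y` is negative, then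
`par-deg E₁ = x + (2a₁−a₂−a₃)/3` is positive. -/
theorem rank_three_conic_argument
    (a₁ a₂ a₃ l : ℝ) (h12 : a₂ < a₁) (h23 : a₃ < a₂) (hl : 0 ≤ l)
    (xm2 : ℝ)
    (hxm : xm2 = (2 / 3) * (-l + a₁ ^ 2 + a₂ ^ 2 + a₃ ^ 2)
        - (2 / 9) * (a₁ + a₂ + a₃) ^ 2)
    (x y : ℝ) (hx : x ^ 2 ≤ xm2)
    (hy : (y + x / 2) ^ 2 = (3 / 4) * (xm2 - x ^ 2))
    (hneg : (a₁ + a₂ - 2 * a₃) / 3 + x + y < 0) :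
    0 < x + (2 * a₁ - a₂ - a₃) / 3 :=
  rank_three_conic_argument_general a₁ a₂ a₃ l h12 h23 hl xm2 hxm x y hy hneg
end

section
/- Let a₁ > a₂ > a₃ be real numbers and l ≥ 0 a real number. Let β₁, β₂, β₃ be real numbers satisfying β₁ + β₂ + β₃ = −(a₁ + a₂ + a₃) and β₁² + β₂² + β₃² = −l + a₁² + a₂² + a₃². Then a₁ + β₁ ≥ 0 or (a₁ + a₂) + (β₁ + β₂) ≥ 0. -/
/-!
Put `xᵢ = aᵢ + βᵢ`. The quadratic constraint says `2 ∑ aᵢ xᵢ = ∑ xᵢ² + l ≥ 0`, while the linear one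
says `x₁ + x₂ + x₃ = 0`, so summation by parts gives `∑ aᵢ xᵢ = (a₁ - a₂) x₁ + (a₂ - a₃) (x₁ + x₂)`.
If both partial sums `x₁` and `x₁ + x₂` were negative, this would be negative for `a₁ > a₂ > a₃`.
-/

section

variable {R : Type*} [CommRing R] [LinearOrder R] [IsStrictOrderedRing R]

theorem sum_mul_neg_of_partial_sums_neg {a₁ a₂ a₃ x₁ x₂ x₃ : R} (h12 : a₂ < a₁) (h23 : a₃ ≤ a₂)
    (hx₁ : x₁ < 0) (hx₁₂ : x₁ + x₂ < 0) (hsum : x₁ + x₂ + x₃ = 0) :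
    a₁ * x₁ + a₂ * x₂ + a₃ * x₃ < 0 :=
  calc a₁ * x₁ + a₂ * x₂ + a₃ * x₃ = (a₁ - a₂) * x₁ + (a₂ - a₃) * (x₁ + x₂) := by
        linear_combination a₃ * hsum
    _ < 0 := add_neg_of_neg_of_nonpos (mul_neg_of_pos_of_neg (sub_pos.2 h12) hx₁)
        (mul_nonpos_of_nonneg_of_nonpos (sub_nonneg.2 h23) hx₁₂.le)

theorem sum_mul_add_nonneg_of_sum_sq_eq {a₁ a₂ a₃ β₁ β₂ β₃ l : R} (hl : 0 ≤ l)
    (hsq : β₁ ^ 2 + β₂ ^ 2 + β₃ ^ 2 = -l + a₁ ^ 2 + a₂ ^ 2 + a₃ ^ 2) :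
    0 ≤ a₁ * (a₁ + β₁) + a₂ * (a₂ + β₂) + a₃ * (a₃ + β₃) := by
  have key : 2 * (a₁ * (a₁ + β₁) + a₂ * (a₂ + β₂) + a₃ * (a₃ + β₃)) =
      (a₁ + β₁) ^ 2 + (a₂ + β₂) ^ 2 + (a₃ + β₃) ^ 2 + l := by
    linear_combination -hsq
  have : 0 ≤ 2 * (a₁ * (a₁ + β₁) + a₂ * (a₂ + β₂) + a₃ * (a₃ + β₃)) := by
    rw [key]
    positivity
  linarith

end

/-- The numerical core of the length-two Harder–Narasimhan filtration (rank 3)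
case of Proposition 2: under the two constraints on `β₁, β₂, β₃`, the parabolic
degree of `E₁` or of `E₂` is non-negative, i.e. `a₁ + β₁ ≥ 0` or
`(a₁ + a₂) + (β₁ + β₂) ≥ 0`. -/
theorem rank_three_parabolic_degree_nonneg
    (a₁ a₂ a₃ l : ℝ) (h12 : a₂ < a₁) (h23 : a₃ < a₂) (hl : 0 ≤ l)
    (β₁ β₂ β₃ : ℝ)
    (hsum : β₁ + β₂ + β₃ = -(a₁ + a₂ + a₃))
    (hsq : β₁ ^ 2 + β₂ ^ 2 + β₃ ^ 2 = -l + a₁ ^ 2 + a₂ ^ 2 + a₃ ^ 2) :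
    0 ≤ a₁ + β₁ ∨ 0 ≤ (a₁ + a₂) + (β₁ + β₂) := by
  by_contra! ⟨hE₁, hE₂⟩
  have hx₁₂ : (a₁ + β₁) + (a₂ + β₂) < 0 := by linarith
  have hx : (a₁ + β₁) + (a₂ + β₂) + (a₃ + β₃) = 0 := by linarith
  exact (sum_mul_neg_of_partial_sums_neg h12 h23.le hE₁ hx₁₂ hx).not_ge
    (sum_mul_add_nonneg_of_sum_sq_eq hl hsq)
end
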